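/- arXiv:1805.06393 — 2 statements merged into one kernel-verified Lean document; each statement's English description precedes it below -/
import Mathlib

section
/- Suppose there exists a smooth function φ : S → ℝ achieving a Chaplygin Hamiltonisation, in the following sense: setting Ψ : S × ℝ^r → S × ℝ^r, Ψ(s, p̃) = (s, e^{−φ(s)} p̃), and H̃ := H ∘ Ψ, the vector field identity DΨ(s,p̃)[X_{H̃}(s,p̃)] = e^{−φ(s)} X(Ψ(s,p̃)) holds for all (s,p̃) ∈ S × ℝ^r, where X_{H̃} = (∂H̃/∂p̃_1,…,∂H̃/∂p̃_r appearing in the s-slots; −∂H̃/∂s^1,…,−∂H̃/∂s^r in the p̃-slots) is the canonical Hamiltonian vector field of H̃. Then the divergence of e^{(r−1)φ(s)} X vanishes identically on S × ℝ^r; that is, the reduced equations of motion preserve the basic measure e^{(r−1)φ(s)} ds^1⋯ds^r dp_1⋯dp_r. -/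
noncomputable section

open Matrix

/-- Partial derivative `∂f/∂s^i` of a function on phase space `(Fin r → ℝ) × (Fin r → ℝ)`. -/
def pdq (r : ℕ) (f : (Fin r → ℝ) × (Fin r → ℝ) → ℝ) (i : Fin r)
    (x : (Fin r → ℝ) × (Fin r → ℝ)) : ℝ :=
  fderiv ℝ f x (Pi.single i 1, 0)

/-- Partial derivative `∂f/∂p_i` of a function on phase space. -/
def pdp (r : ℕ) (f : (Fin r → ℝ) × (Fin r → ℝ) → ℝ) (i : Fin r)
    (x : (Fin r → ℝ) × (Fin r → ℝ)) : ℝ :=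
  fderiv ℝ f x (0, Pi.single i 1)

/-- Divergence of a vector field on phase space:
`Σ_i ∂Y^{s_i}/∂s^i + Σ_i ∂Y^{p_i}/∂p_i`. -/
def divg (r : ℕ)
    (Y : (Fin r → ℝ) × (Fin r → ℝ) → (Fin r → ℝ) × (Fin r → ℝ))
    (x : (Fin r → ℝ) × (Fin r → ℝ)) : ℝ :=
  (∑ i, pdq r (fun y => (Y y).1 i) i x) + ∑ i, pdp r (fun y => (Y y).2 i) i x



private lemma hasFDerivAt_coord {r : ℕ} (l : Fin r) (x : (Fin r → ℝ) × (Fin r → ℝ)) :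
    HasFDerivAt (fun y : (Fin r → ℝ) × (Fin r → ℝ) => y.2 l)
      ((ContinuousLinearMap.proj l).comp (ContinuousLinearMap.snd ℝ (Fin r → ℝ) (Fin r → ℝ))) x := by
  have h := ((ContinuousLinearMap.proj l).comp
    (ContinuousLinearMap.snd ℝ (Fin r → ℝ) (Fin r → ℝ))).hasFDerivAt (x := x)
  exact h

private lemma hasFDerivAt_coeff {r : ℕ} {b : (Fin r → ℝ) → ℝ} {s q : Fin r → ℝ}
    (hb : DifferentiableAt ℝ b s) :
    HasFDerivAt (fun y : (Fin r → ℝ) × (Fin r → ℝ) => b y.1)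
      ((fderiv ℝ b s).comp (ContinuousLinearMap.fst ℝ (Fin r → ℝ) (Fin r → ℝ))) (s, q) :=
  hb.hasFDerivAt.comp (s, q) hasFDerivAt_fst

private lemma lin_fderiv {r : ℕ} (b : Fin r → (Fin r → ℝ) → ℝ)
    (f : (Fin r → ℝ) × (Fin r → ℝ) → ℝ) (s q : Fin r → ℝ)
    (hf : f =ᶠ[nhds (s, q)] fun y => ∑ l, b l y.1 * y.2 l)
    (hb : ∀ l, DifferentiableAt ℝ (b l) s) (v : (Fin r → ℝ) × (Fin r → ℝ)) :
    fderiv ℝ f (s, q) v = ∑ l, (fderiv ℝ (b l) s v.1 * q l + b l s * v.2 l) := by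
  rw [hf.fderiv_eq]
  have hd : HasFDerivAt (fun y : (Fin r → ℝ) × (Fin r → ℝ) => ∑ l, b l y.1 * y.2 l) _ (s, q) :=
    HasFDerivAt.fun_sum (fun l _ => (hasFDerivAt_coeff (hb l)).mul (hasFDerivAt_coord l (s, q)))
  rw [hd.fderiv]
  simp only [ContinuousLinearMap.sum_apply, ContinuousLinearMap.add_apply,
    ContinuousLinearMap.smul_apply, ContinuousLinearMap.comp_apply, ContinuousLinearMap.coe_fst',
    ContinuousLinearMap.coe_snd', ContinuousLinearMap.proj_apply, smul_eq_mul]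
  exact Finset.sum_congr rfl fun l _ => by ring

private lemma quad_fderiv {r : ℕ} (a : Fin r → Fin r → (Fin r → ℝ) → ℝ) (u : (Fin r → ℝ) → ℝ)
    (f : (Fin r → ℝ) × (Fin r → ℝ) → ℝ) (s q : Fin r → ℝ)
    (hf : f =ᶠ[nhds (s, q)] fun y => (∑ j, ∑ l, a j l y.1 * y.2 j * y.2 l) + u y.1)
    (ha : ∀ j l, DifferentiableAt ℝ (a j l) s) (hu : DifferentiableAt ℝ u s)
    (v : (Fin r → ℝ) × (Fin r → ℝ)) :
    fderiv ℝ f (s, q) v = (∑ j, ∑ l, (fderiv ℝ (a j l) s v.1 * q j * q l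
      + a j l s * v.2 j * q l + a j l s * q j * v.2 l)) + fderiv ℝ u s v.1 := by
  rw [hf.fderiv_eq]
  have hd : HasFDerivAt
      (fun y : (Fin r → ℝ) × (Fin r → ℝ) => (∑ j, ∑ l, a j l y.1 * y.2 j * y.2 l) + u y.1)
      _ (s, q) :=
    (HasFDerivAt.fun_sum (fun j _ => HasFDerivAt.fun_sum (fun l _ =>
      ((hasFDerivAt_coeff (ha j l)).mul (hasFDerivAt_coord j (s, q))).mul
        (hasFDerivAt_coord l (s, q))))).add (hasFDerivAt_coeff hu)
  rw [hd.fderiv]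
  simp only [ContinuousLinearMap.add_apply, ContinuousLinearMap.sum_apply,
    ContinuousLinearMap.smul_apply, ContinuousLinearMap.comp_apply, ContinuousLinearMap.coe_fst',
    ContinuousLinearMap.coe_snd', ContinuousLinearMap.proj_apply, smul_eq_mul, Pi.mul_apply]
  refine congrArg₂ (· + ·) (Finset.sum_congr rfl fun j _ => Finset.sum_congr rfl fun l _ => by ring) rfl

private lemma sum_skew {r : ℕ} (f : Fin r → Fin r → ℝ) (hf : ∀ i j, f i j = - f j i) :
    ∑ i, ∑ j, f i j = 0 := by
  have h1 : ∑ i, ∑ j, f i j = ∑ i, ∑ j, -f j i :=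
    Finset.sum_congr rfl fun i _ => Finset.sum_congr rfl fun j _ => hf i j
  have h2 : ∑ i : Fin r, ∑ j : Fin r, -f j i = -∑ i : Fin r, ∑ j : Fin r, f j i := by
    simp [Finset.sum_neg_distrib]
  have h3 : ∑ i : Fin r, ∑ j : Fin r, f j i = ∑ i, ∑ j, f i j := Finset.sum_comm
  linarith [h1, h2.symm ▸ h1]

private lemma clm_expand {r : ℕ} (L : (Fin r → ℝ) →L[ℝ] ℝ) (v : Fin r → ℝ) :
    L v = ∑ j, v j * L (Pi.single j 1) := by
  have : v = ∑ j, v j • (Pi.single j 1 : Fin r → ℝ) := by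
    funext k
    simp [Pi.single_apply, Finset.sum_apply]
  nth_rewrite 1 [this]
  rw [map_sum]
  exact Finset.sum_congr rfl fun j _ => by rw [_root_.map_smul]; rfl


private lemma chap_contDiffOn_finprod {r : ℕ} {S : Set (Fin r → ℝ)} {ι : Type*} (t : Finset ι)
    (g : ι → (Fin r → ℝ) → ℝ) (hg : ∀ i ∈ t, ContDiffOn ℝ (⊤ : ℕ∞) (g i) S) :
    ContDiffOn ℝ (⊤ : ℕ∞) (fun s => ∏ i ∈ t, g i s) S := by
  classical
  induction t using Finset.induction with
  | empty => simpa using contDiffOn_const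
  | insert a t' hni ih =>
    simp only [Finset.prod_insert hni]
    exact (hg a (Finset.mem_insert_self a t')).mul
      (ih fun i hi => hg i (Finset.mem_insert_of_mem hi))

private lemma contDiffOn_det {r : ℕ} {S : Set (Fin r → ℝ)}
    (M : (Fin r → ℝ) → Matrix (Fin r) (Fin r) ℝ)
    (hM : ∀ i j, ContDiffOn ℝ (⊤ : ℕ∞) (fun s => M s i j) S) :
    ContDiffOn ℝ (⊤ : ℕ∞) (fun s => (M s).det) S := by
  have h : (fun s => (M s).det)
      = fun s => ∑ σ : Equiv.Perm (Fin r), ((Equiv.Perm.sign σ : ℤ) : ℝ) * ∏ i, M s (σ i) i := by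
    funext s
    rw [Matrix.det_apply]
    exact Finset.sum_congr rfl fun σ _ => by rw [Units.smul_def, zsmul_eq_mul]
  rw [h]
  exact ContDiffOn.sum fun σ _ =>
    contDiffOn_const.mul (chap_contDiffOn_finprod Finset.univ _ fun i _ => hM (σ i) i)

private lemma contDiffOn_inv_entry {r : ℕ} {S : Set (Fin r → ℝ)}
    (K : (Fin r → ℝ) → Matrix (Fin r) (Fin r) ℝ)
    (hK : ∀ i j, ContDiffOn ℝ (⊤ : ℕ∞) (fun s => K s i j) S)
    (hdet : ∀ s ∈ S, (K s).det ≠ 0) (i j : Fin r) :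
    ContDiffOn ℝ (⊤ : ℕ∞) (fun s => (K s)⁻¹ i j) S := by
  have h1 : (fun s => (K s)⁻¹ i j)
      = fun s => ((K s).det)⁻¹ * ((K s).updateRow j (Pi.single i 1)).det := by
    funext s
    rw [Matrix.inv_def, Matrix.smul_apply, Ring.inverse_eq_inv, Matrix.adjugate_apply,
      smul_eq_mul]
  rw [h1]
  refine ((contDiffOn_det K hK).inv hdet).mul (contDiffOn_det _ fun a b => ?_)
  by_cases h : a = j
  · subst h
    simpa [Matrix.updateRow_apply] using contDiffOn_const
  · simpa [Matrix.updateRow_apply, h] using hK a b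

/-- if a smooth `φ : S → ℝ` achieves a Chaplygin Hamiltonisation
(`DΨ ∘ X_{H̃} = e^{−φ} X ∘ Ψ` where `Ψ(s,p̃) = (s, e^{−φ(s)} p̃)` and `H̃ = H ∘ Ψ`),
then the divergence of `e^{(r−1)φ(s)} X` vanishes identically on `S × ℝ^r`,
i.e. the reduced equations preserve the basic measure `e^{(r−1)φ(s)} ds dp`. -/
theorem hamiltonisation_implies_invariant_measure
    (r : ℕ) (hr : 2 ≤ r)
    (S : Set (Fin r → ℝ)) (hS : IsOpen S)
    (K : (Fin r → ℝ) → Matrix (Fin r) (Fin r) ℝ)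
    (hKsmooth : ∀ i j, ContDiffOn ℝ (⊤ : ℕ∞) (fun s => K s i j) S)
    (hKsym : ∀ s ∈ S, (K s).IsSymm)
    (hKpos : ∀ s ∈ S, (K s).PosDef)
    (U : (Fin r → ℝ) → ℝ) (hU : ContDiffOn ℝ (⊤ : ℕ∞) U S)
    (C : Fin r → Fin r → Fin r → (Fin r → ℝ) → ℝ)
    (hCsmooth : ∀ i j k, ContDiffOn ℝ (⊤ : ℕ∞) (C i j k) S)
    (hCskew : ∀ i j k s, C i j k s = - C j i k s)
    (H : (Fin r → ℝ) × (Fin r → ℝ) → ℝ)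
    (hH : ∀ x, H x = (1/2) * (∑ i, ∑ j, (K x.1)⁻¹ i j * x.2 i * x.2 j) + U x.1)
    (X : (Fin r → ℝ) × (Fin r → ℝ) → (Fin r → ℝ) × (Fin r → ℝ))
    (hX : ∀ x, X x =
      (fun i => pdp r H i x,
       fun i => - pdq r H i x - ∑ j, ∑ k, C i j k x.1 * x.2 k * pdp r H j x))
    (φ : (Fin r → ℝ) → ℝ) (hφ : ContDiffOn ℝ (⊤ : ℕ∞) φ S)
    (Ψ : (Fin r → ℝ) × (Fin r → ℝ) → (Fin r → ℝ) × (Fin r → ℝ))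
    (hΨ : ∀ x, Ψ x = (x.1, fun i => Real.exp (-(φ x.1)) * x.2 i))
    (Ht : (Fin r → ℝ) × (Fin r → ℝ) → ℝ) (hHt : ∀ x, Ht x = H (Ψ x))
    (XHt : (Fin r → ℝ) × (Fin r → ℝ) → (Fin r → ℝ) × (Fin r → ℝ))
    (hXHt : ∀ x, XHt x = (fun i => pdp r Ht i x, fun i => - pdq r Ht i x))
    (hHam : ∀ x : (Fin r → ℝ) × (Fin r → ℝ), x.1 ∈ S →
      fderiv ℝ Ψ x (XHt x) = Real.exp (-(φ x.1)) • X (Ψ x)) :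
    ∀ x : (Fin r → ℝ) × (Fin r → ℝ), x.1 ∈ S →
      divg r (fun y => Real.exp (((r : ℝ) - 1) * φ y.1) • X y) x = 0 := by
  classical
  have hdet : ∀ s ∈ S, (K s).det ≠ 0 := fun s hs => ((hKpos s hs).det_pos).ne'
  have hAc : ∀ i j : Fin r, ContDiffOn ℝ (⊤ : ℕ∞) (fun s => (K s)⁻¹ i j) S :=
    contDiffOn_inv_entry K hKsmooth hdet
  have hAd : ∀ (i j : Fin r) (s : Fin r → ℝ), s ∈ S →
      DifferentiableAt ℝ (fun t => (K t)⁻¹ i j) s := fun i j s hs =>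
    ((hAc i j).differentiableOn (by simp)).differentiableAt (hS.mem_nhds hs)
  have hAsym : ∀ s ∈ S, ∀ i j : Fin r, (K s)⁻¹ i j = (K s)⁻¹ j i := by
    intro s hs i j
    have h : ((K s)⁻¹)ᵀ = (K s)⁻¹ := by
      rw [Matrix.transpose_nonsing_inv, (hKsym s hs).eq]
    have h2 := congrFun (congrFun h j) i
    simpa [Matrix.transpose_apply] using h2
  have hφd : ∀ s ∈ S, DifferentiableAt ℝ φ s := fun s hs =>
    (hφ.differentiableOn (by simp)).differentiableAt (hS.mem_nhds hs)
  have hUd : ∀ s ∈ S, DifferentiableAt ℝ U s := fun s hs =>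
    (hU.differentiableOn (by simp)).differentiableAt (hS.mem_nhds hs)
  have hCd : ∀ (i j k : Fin r) (s : Fin r → ℝ), s ∈ S → DifferentiableAt ℝ (C i j k) s :=
    fun i j k s hs => ((hCsmooth i j k).differentiableOn (by simp)).differentiableAt (hS.mem_nhds hs)
  have hAd2 : ∀ (i j k : Fin r) (s : Fin r → ℝ), s ∈ S → DifferentiableAt ℝ
      (fun t => fderiv ℝ (fun w => (K w)⁻¹ j k) t (Pi.single i 1)) s := by
    intro i j k s hs
    have h1 : ContDiffAt ℝ (⊤ : ℕ∞) (fun t => (K t)⁻¹ j k) s := (hAc j k).contDiffAt (hS.mem_nhds hs)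
    have h2 : ContDiffAt ℝ (⊤ : ℕ∞) (fderiv ℝ (fun t => (K t)⁻¹ j k)) s := h1.fderiv_right (by simp)
    exact (h2.clm_apply contDiffAt_const).differentiableAt (by simp)
  have hUd2 : ∀ (i : Fin r) (s : Fin r → ℝ), s ∈ S → DifferentiableAt ℝ
      (fun t => fderiv ℝ U t (Pi.single i 1)) s := by
    intro i s hs
    have h1 : ContDiffAt ℝ (⊤ : ℕ∞) U s := hU.contDiffAt (hS.mem_nhds hs)
    have h2 : ContDiffAt ℝ (⊤ : ℕ∞) (fderiv ℝ U) s := h1.fderiv_right (by simp)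
    exact (h2.clm_apply contDiffAt_const).differentiableAt (by simp)
  have hDAsym : ∀ (s : Fin r → ℝ), s ∈ S → ∀ j l : Fin r,
      fderiv ℝ (fun t => (K t)⁻¹ j l) s = fderiv ℝ (fun t => (K t)⁻¹ l j) s := by
    intro s hs j l
    exact Filter.EventuallyEq.fderiv_eq
      (Filter.eventuallyEq_of_mem (hS.mem_nhds hs) (fun t ht => hAsym t ht j l))
  have hHfun : H = fun y => (∑ j, ∑ l, (1/2 * (K y.1)⁻¹ j l) * y.2 j * y.2 l) + U y.1 := by
    funext y; rw [hH y]
    refine congrArg₂ (· + ·) ?_ rfl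
    rw [Finset.mul_sum]
    exact Finset.sum_congr rfl fun j _ => by
      rw [Finset.mul_sum]; exact Finset.sum_congr rfl fun l _ => by ring
  -- value of pdp H
  have hpdpH : ∀ (z : (Fin r → ℝ) × (Fin r → ℝ)), z.1 ∈ S → ∀ i,
      pdp r H i z = ∑ l, (K z.1)⁻¹ i l * z.2 l := by
    rintro ⟨s, q⟩ hs i
    simp only [pdp]
    rw [quad_fderiv (fun j l t => 1/2 * (K t)⁻¹ j l) U H s q
      (Filter.EventuallyEq.of_eq hHfun)
      (fun j l => (hAd j l s hs).const_mul _) (hUd s hs) (0, Pi.single i 1)]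
    simp only [map_zero, zero_mul, mul_zero, zero_add, add_zero, Pi.zero_apply,
      Pi.single_apply, mul_ite, ite_mul, mul_one, Finset.sum_ite_irrel,
      Finset.sum_const_zero, Finset.sum_ite_eq, Finset.sum_ite_eq', Finset.mem_univ,
      if_true, Finset.sum_add_distrib]
    rw [← Finset.sum_add_distrib]
    exact Finset.sum_congr rfl fun l _ => by rw [hAsym s hs l i]; ring
  -- value of pdq H
  have hpdqH : ∀ (z : (Fin r → ℝ) × (Fin r → ℝ)), z.1 ∈ S → ∀ i,
      pdq r H i z = 1/2 * (∑ j, ∑ l,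
          fderiv ℝ (fun t => (K t)⁻¹ j l) z.1 (Pi.single i 1) * z.2 j * z.2 l)
        + fderiv ℝ U z.1 (Pi.single i 1) := by
    rintro ⟨s, q⟩ hs i
    simp only [pdq]
    rw [quad_fderiv (fun j l t => 1/2 * (K t)⁻¹ j l) U H s q
      (Filter.EventuallyEq.of_eq hHfun)
      (fun j l => (hAd j l s hs).const_mul _) (hUd s hs) (Pi.single i 1, 0)]
    simp only [Pi.zero_apply, mul_zero, zero_mul, add_zero, zero_add]
    refine congrArg₂ (· + ·) ?_ rfl
    rw [Finset.mul_sum]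
    refine Finset.sum_congr rfl fun j _ => ?_
    rw [Finset.mul_sum]
    refine Finset.sum_congr rfl fun l _ => ?_
    rw [fderiv_const_mul (hAd j l s hs) (1/2)]
    simp only [ContinuousLinearMap.smul_apply, smul_eq_mul]
    ring
  -- explicit form of Ht
  have hHtfun : Ht = fun y => (∑ j, ∑ l,
      (Real.exp (-φ y.1) * Real.exp (-φ y.1) * (1/2 * (K y.1)⁻¹ j l)) * y.2 j * y.2 l)
      + U y.1 := by
    funext y
    rw [hHt y, hH (Ψ y), hΨ y]
    dsimp only
    refine congrArg₂ (· + ·) ?_ rfl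
    rw [Finset.mul_sum]
    refine Finset.sum_congr rfl fun j _ => ?_
    rw [Finset.mul_sum]
    exact Finset.sum_congr rfl fun l _ => by ring
  have hHtd : ∀ (j l : Fin r) (s : Fin r → ℝ), s ∈ S → DifferentiableAt ℝ
      (fun t => Real.exp (-φ t) * Real.exp (-φ t) * (1/2 * (K t)⁻¹ j l)) s := by
    intro j l s hs
    exact (((hφd s hs).neg.exp).mul ((hφd s hs).neg.exp)).mul ((hAd j l s hs).const_mul _)
  -- value of pdp Ht
  have hpdpHt : ∀ (z : (Fin r → ℝ) × (Fin r → ℝ)), z.1 ∈ S → ∀ i,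
      pdp r Ht i z = Real.exp (-φ z.1) * Real.exp (-φ z.1)
        * ∑ l, (K z.1)⁻¹ i l * z.2 l := by
    rintro ⟨s, q⟩ hs i
    simp only [pdp]
    rw [quad_fderiv (fun j l t => Real.exp (-φ t) * Real.exp (-φ t) * (1/2 * (K t)⁻¹ j l)) U
      Ht s q (Filter.EventuallyEq.of_eq hHtfun)
      (fun j l => hHtd j l s hs) (hUd s hs) (0, Pi.single i 1)]
    simp only [map_zero, zero_mul, mul_zero, zero_add, add_zero, Pi.zero_apply,
      Pi.single_apply, mul_ite, ite_mul, mul_one, Finset.sum_ite_irrel,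
      Finset.sum_const_zero, Finset.sum_ite_eq, Finset.sum_ite_eq', Finset.mem_univ,
      if_true, Finset.sum_add_distrib]
    rw [Finset.mul_sum, ← Finset.sum_add_distrib]
    exact Finset.sum_congr rfl fun l _ => by rw [hAsym s hs l i]; ring
  -- value of pdq Ht
  have hpdqHt : ∀ (z : (Fin r → ℝ) × (Fin r → ℝ)), z.1 ∈ S → ∀ i,
      pdq r Ht i z = Real.exp (-φ z.1) * Real.exp (-φ z.1)
          * (-(fderiv ℝ φ z.1 (Pi.single i 1)) * (∑ j, ∑ l, (K z.1)⁻¹ j l * z.2 j * z.2 l))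
        + Real.exp (-φ z.1) * Real.exp (-φ z.1)
          * (1/2 * (∑ j, ∑ l,
              fderiv ℝ (fun t => (K t)⁻¹ j l) z.1 (Pi.single i 1) * z.2 j * z.2 l))
        + fderiv ℝ U z.1 (Pi.single i 1) := by
    rintro ⟨s, q⟩ hs i
    simp only [pdq]
    rw [quad_fderiv (fun j l t => Real.exp (-φ t) * Real.exp (-φ t) * (1/2 * (K t)⁻¹ j l)) U
      Ht s q (Filter.EventuallyEq.of_eq hHtfun)
      (fun j l => hHtd j l s hs) (hUd s hs) (Pi.single i 1, 0)]
    simp only [Pi.zero_apply, mul_zero, zero_mul, add_zero, zero_add]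
    have hcD : ∀ j l : Fin r,
        fderiv ℝ (fun t => Real.exp (-φ t) * Real.exp (-φ t) * (1/2 * (K t)⁻¹ j l)) s
          (Pi.single i 1)
        = Real.exp (-φ s) * Real.exp (-φ s)
            * (-(fderiv ℝ φ s (Pi.single i 1)) * (K s)⁻¹ j l
              + 1/2 * fderiv ℝ (fun t => (K t)⁻¹ j l) s (Pi.single i 1)) := by
      intro j l
      have he : DifferentiableAt ℝ (fun t => Real.exp (-φ t)) s := (hφd s hs).neg.exp
      rw [fderiv_fun_mul (he.fun_mul he) ((hAd j l s hs).const_mul _), fderiv_fun_mul he he,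
        fderiv_const_mul (hAd j l s hs) (1/2), fderiv_exp (hφd s hs).fun_neg, fderiv_fun_neg]
      simp only [ContinuousLinearMap.add_apply, ContinuousLinearMap.smul_apply,
        ContinuousLinearMap.neg_apply, smul_eq_mul]
      ring
    refine congrArg₂ (· + ·) ?_ rfl
    calc ∑ j, ∑ l, fderiv ℝ
          (fun t => Real.exp (-φ t) * Real.exp (-φ t) * (1/2 * (K t)⁻¹ j l)) s
          (Pi.single i 1) * q j * q l
        = ∑ j, ∑ l,
          ((Real.exp (-φ s) * Real.exp (-φ s) * (-(fderiv ℝ φ s (Pi.single i 1))))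
              * ((K s)⁻¹ j l * q j * q l)
            + (Real.exp (-φ s) * Real.exp (-φ s) * (1/2))
              * (fderiv ℝ (fun t => (K t)⁻¹ j l) s (Pi.single i 1) * q j * q l)) := by
          refine Finset.sum_congr rfl fun j _ => Finset.sum_congr rfl fun l _ => ?_
          rw [hcD j l]; ring
      _ = _ := by
          simp only [Finset.sum_add_distrib, ← Finset.mul_sum]
          ring
  -- the Hamiltonisation identity, in reduced polynomial form
  have hE : ∀ (z : (Fin r → ℝ) × (Fin r → ℝ)), z.1 ∈ S → ∀ i : Fin r,
      fderiv ℝ φ z.1 (Pi.single i 1) * (∑ j, ∑ l, (K z.1)⁻¹ j l * z.2 j * z.2 l)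
        - (∑ j, (∑ l, (K z.1)⁻¹ j l * z.2 l) * fderiv ℝ φ z.1 (Pi.single j 1)) * z.2 i
        + ∑ j, ∑ k, C i j k z.1 * z.2 k * (∑ l, (K z.1)⁻¹ j l * z.2 l) = 0 := by
    rintro ⟨s, q⟩ hs i
    have hraw := congrFun (congrArg Prod.snd (hHam (s, q) hs)) i
    have hΨfun : Ψ = fun y : (Fin r → ℝ) × (Fin r → ℝ) =>
        ((y.1 : Fin r → ℝ), Real.exp (-φ y.1) • y.2) := by
      funext y
      rw [hΨ y]
      congr 1
    have hφd' : HasFDerivAt (fun y : (Fin r → ℝ) × (Fin r → ℝ) => Real.exp (-φ y.1))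
        (Real.exp (-φ s) • (-((fderiv ℝ φ s).comp
          (ContinuousLinearMap.fst ℝ (Fin r → ℝ) (Fin r → ℝ))))) (s, q) := by
      exact (((hφd s hs).hasFDerivAt.comp (s, q) hasFDerivAt_fst).neg).exp
    have hΨder : HasFDerivAt (fun y : (Fin r → ℝ) × (Fin r → ℝ) =>
        ((y.1 : Fin r → ℝ), Real.exp (-φ y.1) • y.2))
        ((ContinuousLinearMap.fst ℝ (Fin r → ℝ) (Fin r → ℝ)).prod
          (Real.exp (-φ s) • ContinuousLinearMap.snd ℝ (Fin r → ℝ) (Fin r → ℝ)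
            + (Real.exp (-φ s) • (-((fderiv ℝ φ s).comp
                (ContinuousLinearMap.fst ℝ (Fin r → ℝ) (Fin r → ℝ))))).smulRight q))
        (s, q) := by
      exact HasFDerivAt.prodMk hasFDerivAt_fst (hφd'.smul hasFDerivAt_snd)
    rw [hΨfun] at hraw
    rw [hΨder.fderiv] at hraw
    rw [hXHt (s, q)] at hraw
    simp only [ContinuousLinearMap.prod_apply, ContinuousLinearMap.add_apply,
      ContinuousLinearMap.smul_apply, ContinuousLinearMap.smulRight_apply,
      ContinuousLinearMap.comp_apply, ContinuousLinearMap.coe_fst',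
      ContinuousLinearMap.coe_snd', ContinuousLinearMap.neg_apply, Pi.add_apply,
      Pi.smul_apply, Pi.neg_apply, smul_eq_mul] at hraw
    rw [clm_expand (fderiv ℝ φ s) (fun j => pdp r Ht j (s, q))] at hraw
    rw [hX (s, Real.exp (-φ s) • q)] at hraw
    simp only [Prod.smul_snd, Prod.smul_fst, Pi.smul_apply, smul_eq_mul] at hraw
    simp only [hpdpHt (s, q) hs, hpdqHt (s, q) hs] at hraw
    simp only [hpdpH (s, Real.exp (-φ s) • q) hs, hpdqH (s, Real.exp (-φ s) • q) hs,
      Pi.smul_apply, smul_eq_mul] at hraw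
    have n1 : Real.exp (-φ s) * Real.exp (-φ s) * ∑ j, ∑ l,
          fderiv ℝ (fun t => (K t)⁻¹ j l) s (Pi.single i 1) * q j * q l
        = ∑ j, ∑ l, fderiv ℝ (fun t => (K t)⁻¹ j l) s (Pi.single i 1)
            * (Real.exp (-φ s) * q j) * (Real.exp (-φ s) * q l) := by
      rw [Finset.mul_sum]
      refine Finset.sum_congr rfl fun j _ => ?_
      rw [Finset.mul_sum]
      exact Finset.sum_congr rfl fun l _ => by ring
    have n2 : Real.exp (-φ s) * Real.exp (-φ s)
          * ∑ j, (∑ l, (K s)⁻¹ j l * q l) * fderiv ℝ φ s (Pi.single j 1)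
        = ∑ j, (Real.exp (-φ s) * Real.exp (-φ s) * ∑ l, (K s)⁻¹ j l * q l)
            * fderiv ℝ φ s (Pi.single j 1) := by
      rw [Finset.mul_sum]
      exact Finset.sum_congr rfl fun j _ => by ring
    have n3 : Real.exp (-φ s) * Real.exp (-φ s)
          * ∑ j, ∑ k, C i j k s * q k * (∑ l, (K s)⁻¹ j l * q l)
        = ∑ j, ∑ k, C i j k s * (Real.exp (-φ s) * q k)
            * (∑ l, (K s)⁻¹ j l * (Real.exp (-φ s) * q l)) := by
      rw [Finset.mul_sum]
      refine Finset.sum_congr rfl fun j _ => ?_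
      rw [Finset.mul_sum]
      refine Finset.sum_congr rfl fun k _ => ?_
      have hinner : ∑ l, (K s)⁻¹ j l * (Real.exp (-φ s) * q l)
          = Real.exp (-φ s) * ∑ l, (K s)⁻¹ j l * q l := by
        rw [Finset.mul_sum]
        exact Finset.sum_congr rfl fun l _ => by ring
      rw [hinner]; ring
    rw [← n1, ← n2, ← n3] at hraw
    show fderiv ℝ φ s (Pi.single i 1) * (∑ j, ∑ l, (K s)⁻¹ j l * q j * q l)
        - (∑ j, (∑ l, (K s)⁻¹ j l * q l) * fderiv ℝ φ s (Pi.single j 1)) * q i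
        + ∑ j, ∑ k, C i j k s * q k * (∑ l, (K s)⁻¹ j l * q l) = 0
    have key : Real.exp (-φ s) * Real.exp (-φ s) * Real.exp (-φ s) *
        (fderiv ℝ φ s (Pi.single i 1) * (∑ j, ∑ l, (K s)⁻¹ j l * q j * q l)
          - (∑ j, (∑ l, (K s)⁻¹ j l * q l) * fderiv ℝ φ s (Pi.single j 1)) * q i
          + ∑ j, ∑ k, C i j k s * q k * (∑ l, (K s)⁻¹ j l * q l)) = 0 := by
      linear_combination hraw
    have he3 : Real.exp (-φ s) * Real.exp (-φ s) * Real.exp (-φ s) ≠ 0 := by positivity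
    exact (mul_eq_zero.mp key).resolve_left he3
  -- polarised (bilinear) form of the identity
  have hbil : ∀ (s : Fin r → ℝ), s ∈ S → ∀ a b i : Fin r,
      fderiv ℝ φ s (Pi.single i 1) * ((K s)⁻¹ a b + (K s)⁻¹ b a)
        - (∑ j, (K s)⁻¹ j b * fderiv ℝ φ s (Pi.single j 1)) * (if i = a then (1:ℝ) else 0)
        - (∑ j, (K s)⁻¹ j a * fderiv ℝ φ s (Pi.single j 1)) * (if i = b then (1:ℝ) else 0)
        + (∑ j, C i j b s * (K s)⁻¹ j a) + (∑ j, C i j a s * (K s)⁻¹ j b) = 0 := by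
    intro s hs a b i
    have h1 := hE (s, Pi.single a 1) hs i
    have h2 := hE (s, Pi.single b 1) hs i
    have h12 := hE (s, (Pi.single a 1 + Pi.single b 1 : Fin r → ℝ)) hs i
    simp only [Pi.add_apply, Pi.single_apply, mul_ite, ite_mul, mul_zero, zero_mul,
      mul_one, one_mul, add_mul, mul_add, Finset.sum_add_distrib, Finset.sum_ite_irrel,
      Finset.sum_const_zero, Finset.sum_ite_eq, Finset.sum_ite_eq', Finset.mem_univ,
      if_true] at h1 h2 h12
    by_cases hab : a = b
    · subst hab
      by_cases ha : i = a <;>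
        simp only [ha, if_true, if_false, eq_self_iff_true] at h1 h2 h12 ⊢ <;>
        linear_combination h12 - h1 - h2
    · by_cases ha : i = a <;> by_cases hb : i = b
      · exact absurd (ha.symm.trans hb) hab
      all_goals
        simp only [ha, hb, hab, Ne.symm hab, if_true, if_false,
          eq_self_iff_true] at h1 h2 h12 ⊢
      all_goals linear_combination h12 - h1 - h2
  -- the contracted identity
  have hKEY : ∀ (s : Fin r → ℝ), s ∈ S → ∀ a : Fin r,
      ∑ i, ∑ j, C i j i s * (K s)⁻¹ j a
        = ((r:ℝ) - 1) * ∑ j, (K s)⁻¹ j a * fderiv ℝ φ s (Pi.single j 1) := by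
    intro s hs a
    have hsum : ∑ i, (fderiv ℝ φ s (Pi.single i 1) * ((K s)⁻¹ a i + (K s)⁻¹ i a)
        - (∑ j, (K s)⁻¹ j i * fderiv ℝ φ s (Pi.single j 1)) * (if i = a then (1:ℝ) else 0)
        - (∑ j, (K s)⁻¹ j a * fderiv ℝ φ s (Pi.single j 1)) * (if i = i then (1:ℝ) else 0)
        + (∑ j, C i j i s * (K s)⁻¹ j a) + (∑ j, C i j a s * (K s)⁻¹ j i)) = 0 :=
      Finset.sum_eq_zero fun i _ => hbil s hs a i i
    simp only [eq_self_iff_true, if_true, mul_one] at hsum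
    simp only [Finset.sum_add_distrib, Finset.sum_sub_distrib, mul_ite, mul_one, mul_zero,
      Finset.sum_ite_eq', Finset.mem_univ, if_true, Finset.sum_const, smul_eq_mul,
      Finset.card_univ, Fintype.card_fin] at hsum
    have e1 : ∑ i, fderiv ℝ φ s (Pi.single i 1) * ((K s)⁻¹ a i + (K s)⁻¹ i a)
        = 2 * ∑ j, (K s)⁻¹ j a * fderiv ℝ φ s (Pi.single j 1) := by
      rw [Finset.mul_sum]
      exact Finset.sum_congr rfl fun i _ => by rw [hAsym s hs a i]; ring
    have e5 : ∑ i, ∑ j, C i j a s * (K s)⁻¹ j i = 0 := by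
      refine sum_skew _ fun i j => ?_
      rw [hCskew i j a s, hAsym s hs j i]; ring
    linear_combination hsum - e1 - e5
  -- the divergence computation
  intro x hx
  obtain ⟨s, q⟩ := x
  have hs : s ∈ S := hx
  have hgd : DifferentiableAt ℝ (fun t => Real.exp (((r:ℝ) - 1) * φ t)) s :=
    ((hφd s hs).const_mul _).exp
  have hmem : S ×ˢ (Set.univ : Set (Fin r → ℝ)) ∈ nhds (s, q) :=
    (hS.prod isOpen_univ).mem_nhds ⟨hs, trivial⟩
  simp only [divg]
  have hA1 : ∀ i : Fin r,
      pdq r (fun y => (Real.exp (((r:ℝ) - 1) * φ y.1) • X y).1 i) i (s, q)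
      = ∑ l, (Real.exp (((r:ℝ) - 1) * φ s)
            * (((r:ℝ) - 1) * ((K s)⁻¹ i l * fderiv ℝ φ s (Pi.single i 1))
              + fderiv ℝ (fun t => (K t)⁻¹ i l) s (Pi.single i 1))) * q l := by
    intro i
    simp only [pdq]
    have hev : (fun y : (Fin r → ℝ) × (Fin r → ℝ) =>
          (Real.exp (((r:ℝ) - 1) * φ y.1) • X y).1 i) =ᶠ[nhds (s, q)]
        fun y => ∑ l, Real.exp (((r:ℝ) - 1) * φ y.1) * (K y.1)⁻¹ i l * y.2 l := by
      refine Filter.eventuallyEq_of_mem hmem fun y hy => ?_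
      have hy1 : y.1 ∈ S := hy.1
      simp only [Prod.smul_fst, Pi.smul_apply, smul_eq_mul]
      rw [hX y]
      dsimp only
      rw [hpdpH y hy1 i, Finset.mul_sum]
      exact Finset.sum_congr rfl fun l _ => by ring
    rw [lin_fderiv (fun l t => Real.exp (((r:ℝ) - 1) * φ t) * (K t)⁻¹ i l) _ s q hev
      (fun l => hgd.mul (hAd i l s hs)) (Pi.single i 1, 0)]
    simp only [Pi.zero_apply, mul_zero, add_zero]
    refine Finset.sum_congr rfl fun l _ => ?_
    rw [fderiv_fun_mul hgd (hAd i l s hs), fderiv_exp ((hφd s hs).const_mul _),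
      fderiv_const_mul (hφd s hs) _]
    simp only [ContinuousLinearMap.add_apply, ContinuousLinearMap.smul_apply, smul_eq_mul]
    ring
  have hA2 : ∀ i : Fin r,
      pdp r (fun y => (Real.exp (((r:ℝ) - 1) * φ y.1) • X y).2 i) i (s, q)
      = (∑ l, (Real.exp (((r:ℝ) - 1) * φ s)
            * (-(1/2 * fderiv ℝ (fun t => (K t)⁻¹ i l) s (Pi.single i 1))
              - ∑ j, C i j i s * (K s)⁻¹ j l)) * q l)
        + ∑ k, (Real.exp (((r:ℝ) - 1) * φ s)
            * (-(1/2 * fderiv ℝ (fun t => (K t)⁻¹ k i) s (Pi.single i 1))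
              - ∑ j, C i j k s * (K s)⁻¹ j i)) * q k := by
    intro i
    simp only [pdp]
    have hev : (fun y : (Fin r → ℝ) × (Fin r → ℝ) =>
          (Real.exp (((r:ℝ) - 1) * φ y.1) • X y).2 i) =ᶠ[nhds (s, q)]
        fun y => (∑ k, ∑ l, Real.exp (((r:ℝ) - 1) * φ y.1)
            * (-(1/2 * fderiv ℝ (fun t => (K t)⁻¹ k l) y.1 (Pi.single i 1))
              - ∑ j, C i j k y.1 * (K y.1)⁻¹ j l) * y.2 k * y.2 l)
          + (-(Real.exp (((r:ℝ) - 1) * φ y.1) * fderiv ℝ U y.1 (Pi.single i 1))) := by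
      refine Filter.eventuallyEq_of_mem hmem fun y hy => ?_
      have hy1 : y.1 ∈ S := hy.1
      simp only [Prod.smul_snd, Pi.smul_apply, smul_eq_mul]
      rw [hX y]
      dsimp only
      rw [hpdqH y hy1 i]
      simp only [hpdpH y hy1]
      have hswap : ∑ j, ∑ k, C i j k y.1 * y.2 k * ∑ l, (K y.1)⁻¹ j l * y.2 l
          = ∑ k, ∑ l, (∑ j, C i j k y.1 * (K y.1)⁻¹ j l) * y.2 k * y.2 l := by
        calc ∑ j, ∑ k, C i j k y.1 * y.2 k * ∑ l, (K y.1)⁻¹ j l * y.2 l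
            = ∑ j, ∑ k, ∑ l, C i j k y.1 * (K y.1)⁻¹ j l * y.2 k * y.2 l := by
              refine Finset.sum_congr rfl fun j _ => Finset.sum_congr rfl fun k _ => ?_
              rw [Finset.mul_sum]
              exact Finset.sum_congr rfl fun l _ => by ring
          _ = ∑ k, ∑ j, ∑ l, C i j k y.1 * (K y.1)⁻¹ j l * y.2 k * y.2 l :=
              Finset.sum_comm
          _ = ∑ k, ∑ l, ∑ j, C i j k y.1 * (K y.1)⁻¹ j l * y.2 k * y.2 l :=
              Finset.sum_congr rfl fun k _ => Finset.sum_comm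
          _ = ∑ k, ∑ l, (∑ j, C i j k y.1 * (K y.1)⁻¹ j l) * y.2 k * y.2 l := by
              refine Finset.sum_congr rfl fun k _ => Finset.sum_congr rfl fun l _ => ?_
              rw [Finset.sum_mul, Finset.sum_mul]
      have hsplit : ∑ k, ∑ l, Real.exp (((r:ℝ) - 1) * φ y.1)
            * (-(1/2 * fderiv ℝ (fun t => (K t)⁻¹ k l) y.1 (Pi.single i 1))
              - ∑ j, C i j k y.1 * (K y.1)⁻¹ j l) * y.2 k * y.2 l
          = (-(Real.exp (((r:ℝ) - 1) * φ y.1) * (1/2)))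
              * (∑ k, ∑ l, fderiv ℝ (fun t => (K t)⁻¹ k l) y.1 (Pi.single i 1)
                  * y.2 k * y.2 l)
            + (-(Real.exp (((r:ℝ) - 1) * φ y.1)))
              * (∑ k, ∑ l, (∑ j, C i j k y.1 * (K y.1)⁻¹ j l) * y.2 k * y.2 l) := by
        simp only [Finset.mul_sum]
        rw [← Finset.sum_add_distrib]
        refine Finset.sum_congr rfl fun k _ => ?_
        rw [← Finset.sum_add_distrib]
        exact Finset.sum_congr rfl fun l _ => by ring
      rw [hsplit, hswap]
      ring
    rw [quad_fderiv (fun k l t => Real.exp (((r:ℝ) - 1) * φ t)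
        * (-(1/2 * fderiv ℝ (fun w => (K w)⁻¹ k l) t (Pi.single i 1))
          - ∑ j, C i j k t * (K t)⁻¹ j l))
      (fun t => -(Real.exp (((r:ℝ) - 1) * φ t) * fderiv ℝ U t (Pi.single i 1)))
      _ s q hev
      (fun k l => hgd.mul ((((hAd2 i k l s hs).const_mul (1/2)).neg).sub
        (DifferentiableAt.fun_sum fun j _ => (hCd i j k s hs).mul (hAd j l s hs))))
      ((hgd.mul (hUd2 i s hs)).neg) (0, Pi.single i 1)]
    simp only [map_zero, zero_mul, mul_zero, zero_add, add_zero, Pi.zero_apply,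
      Pi.single_apply, mul_ite, ite_mul, mul_one, Finset.sum_ite_irrel,
      Finset.sum_const_zero, Finset.sum_ite_eq, Finset.sum_ite_eq', Finset.mem_univ,
      if_true, Finset.sum_add_distrib]
  rw [Finset.sum_congr rfl fun i (_ : i ∈ Finset.univ) => hA1 i,
     Finset.sum_congr rfl fun i (_ : i ∈ Finset.univ) => hA2 i]
  have hper : ∀ i : Fin r,
      (∑ l, (Real.exp (((r:ℝ) - 1) * φ s)
          * (((r:ℝ) - 1) * ((K s)⁻¹ i l * fderiv ℝ φ s (Pi.single i 1))
            + fderiv ℝ (fun t => (K t)⁻¹ i l) s (Pi.single i 1))) * q l)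
      + ((∑ l, (Real.exp (((r:ℝ) - 1) * φ s)
            * (-(1/2 * fderiv ℝ (fun t => (K t)⁻¹ i l) s (Pi.single i 1))
              - ∑ j, C i j i s * (K s)⁻¹ j l)) * q l)
        + ∑ k, (Real.exp (((r:ℝ) - 1) * φ s)
            * (-(1/2 * fderiv ℝ (fun t => (K t)⁻¹ k i) s (Pi.single i 1))
              - ∑ j, C i j k s * (K s)⁻¹ j i)) * q k)
      = ∑ l, (((r:ℝ) - 1) * ((K s)⁻¹ i l * fderiv ℝ φ s (Pi.single i 1))
          - (∑ j, C i j i s * (K s)⁻¹ j l) - ∑ j, C i j l s * (K s)⁻¹ j i)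
          * (Real.exp (((r:ℝ) - 1) * φ s) * q l) := by
    intro i
    rw [← Finset.sum_add_distrib, ← Finset.sum_add_distrib]
    refine Finset.sum_congr rfl fun l _ => ?_
    rw [hDAsym s hs l i]
    ring
  calc (∑ i, (∑ l, (Real.exp (((r:ℝ) - 1) * φ s)
          * (((r:ℝ) - 1) * ((K s)⁻¹ i l * fderiv ℝ φ s (Pi.single i 1))
            + fderiv ℝ (fun t => (K t)⁻¹ i l) s (Pi.single i 1))) * q l))
      + ∑ i, ((∑ l, (Real.exp (((r:ℝ) - 1) * φ s)
            * (-(1/2 * fderiv ℝ (fun t => (K t)⁻¹ i l) s (Pi.single i 1))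
              - ∑ j, C i j i s * (K s)⁻¹ j l)) * q l)
        + ∑ k, (Real.exp (((r:ℝ) - 1) * φ s)
            * (-(1/2 * fderiv ℝ (fun t => (K t)⁻¹ k i) s (Pi.single i 1))
              - ∑ j, C i j k s * (K s)⁻¹ j i)) * q k)
      = ∑ i, ∑ l, (((r:ℝ) - 1) * ((K s)⁻¹ i l * fderiv ℝ φ s (Pi.single i 1))
          - (∑ j, C i j i s * (K s)⁻¹ j l) - ∑ j, C i j l s * (K s)⁻¹ j i)
          * (Real.exp (((r:ℝ) - 1) * φ s) * q l) := by
        rw [← Finset.sum_add_distrib]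
        exact Finset.sum_congr rfl fun i _ => hper i
    _ = ∑ l, ∑ i, (((r:ℝ) - 1) * ((K s)⁻¹ i l * fderiv ℝ φ s (Pi.single i 1))
          - (∑ j, C i j i s * (K s)⁻¹ j l) - ∑ j, C i j l s * (K s)⁻¹ j i)
          * (Real.exp (((r:ℝ) - 1) * φ s) * q l) := Finset.sum_comm
    _ = 0 := by
        refine Finset.sum_eq_zero fun l _ => ?_
        rw [← Finset.sum_mul]
        have k1 := hKEY s hs l
        have k2 : ∑ i, ∑ j, C i j l s * (K s)⁻¹ j i = 0 := by
          refine sum_skew _ fun i j => ?_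
          rw [hCskew i j l s, hAsym s hs j i]; ring
        have hz : ∑ i, (((r:ℝ) - 1) * ((K s)⁻¹ i l * fderiv ℝ φ s (Pi.single i 1))
            - (∑ j, C i j i s * (K s)⁻¹ j l) - ∑ j, C i j l s * (K s)⁻¹ j i) = 0 := by
          simp only [Finset.sum_sub_distrib, ← Finset.mul_sum]
          linear_combination -k1 - k2
        rw [hz, zero_mul]
end
end

section
/- (Triple-product formula for the rubber-rolling body with diagonal mass tensor.) Assume in addition that J is diagonal. Then for every s ∈ ℝ^{n−1} and all indices 1 ≤ i, j, l ≤ n−1, the following identity holds: (1/R³) ( I(e_i ∧ e_j), e_l ∧ e_n )_κ + m ⟨ −(1/R²)(e_i ∧ e_j) s̃ , e_l − (1/R)(e_l ∧ e_n) s̃ ⟩ = (m a / R³) ( s_j δ_{il} − s_i δ_{jl} ), where ⟨·,·⟩ is the Euclidean inner product on ℝ^n and δ the Kronecker delta. In particular, if moreover a = 0, the left-hand side vanishes identically (and hence all gyroscopic coefficients of the reduced system vanish). -/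
noncomputable section

/-- `u ∧ v := u vᵀ − v uᵀ`, a skew-symmetric `n × n` matrix. -/
def wedge {n : ℕ} (u v : Fin n → ℝ) : Matrix (Fin n) (Fin n) ℝ :=
  Matrix.vecMulVec u v - Matrix.vecMulVec v u

/-- Killing pairing `(ξ, η)_κ := −(1/2) tr(ξη)`. -/
def killing {n : ℕ} (ξ η : Matrix (Fin n) (Fin n) ℝ) : ℝ :=
  -(1/2) * Matrix.trace (ξ * η)

/-- Inertia operator `I(Ω) := JΩ + ΩJ` associated with the mass tensor `J`. -/
def inertia {n : ℕ} (J Ω : Matrix (Fin n) (Fin n) ℝ) : Matrix (Fin n) (Fin n) ℝ :=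
  J * Ω + Ω * J

/-- Euclidean inner product on `ℝ^n`. -/
def edot {n : ℕ} (u v : Fin n → ℝ) : ℝ := ∑ μ, u μ * v μ

/-!
The Killing term vanishes: for a diagonal mass tensor `I(e_i ∧ e_j) = (J_ii + J_jj) e_i ∧ e_j`,
and `(e_i ∧ e_j, e_l ∧ e_n)_κ = δ_il δ_jn - δ_in δ_jl` is zero because `i, j < n`. In the remaining
term, `(e_i ∧ e_j) s̃ = s_j e_i - s_i e_j` is orthogonal to `e_n`, so of
`e_l - (1/R)(e_l ∧ e_n) s̃ = -(a/R) e_l + (s_l/R) e_n` only the `e_l`-component `-(a/R)` contributes.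
-/

open Matrix

lemma edot_eq_dotProduct {n : ℕ} (u v : Fin n → ℝ) : edot u v = u ⬝ᵥ v := rfl

lemma wedge_mulVec {n : ℕ} (u v x : Fin n → ℝ) :
    wedge u v *ᵥ x = (v ⬝ᵥ x) • u - (u ⬝ᵥ x) • v := by
  simp only [wedge, sub_mulVec, vecMulVec_mulVec, op_smul_eq_smul]

lemma wedge_single_mulVec {n : ℕ} (p q : Fin n) (x : Fin n → ℝ) :
    wedge (Pi.single p 1) (Pi.single q 1) *ᵥ x = x q • Pi.single p 1 - x p • Pi.single q 1 := by
  rw [wedge_mulVec, single_one_dotProduct, single_one_dotProduct]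

lemma killing_smul_left {n : ℕ} (c : ℝ) (ξ η : Matrix (Fin n) (Fin n) ℝ) :
    killing (c • ξ) η = c * killing ξ η := by
  simp only [killing, smul_mul, trace_smul, smul_eq_mul]
  ring

lemma killing_wedge_wedge {n : ℕ} (u v w x : Fin n → ℝ) :
    killing (wedge u v) (wedge w x) = (u ⬝ᵥ w) * (v ⬝ᵥ x) - (u ⬝ᵥ x) * (v ⬝ᵥ w) := by
  simp only [killing, wedge, mul_sub, sub_mul, vecMulVec_mul_vecMulVec, trace_sub,
    trace_vecMulVec, dotProduct_smul, smul_eq_mul]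
  ring

lemma inertia_diagonal_wedge_single {n : ℕ} (D : Fin n → ℝ) (p q : Fin n) :
    inertia (diagonal D) (wedge (Pi.single p 1) (Pi.single q 1)) =
      (D p + D q) • wedge (Pi.single p 1) (Pi.single q 1) := by
  have single_eq_smul (k : Fin n) (c : ℝ) : Pi.single k c = c • Pi.single k 1 := by
    rw [← Pi.single_smul', smul_eq_mul, mul_one]
  simp only [inertia, wedge, mul_sub, sub_mul, mul_vecMulVec, vecMulVec_mul,
    diagonal_mulVec_single, single_vecMul_diagonal, mul_one, one_mul]
  rw [single_eq_smul p (D p), single_eq_smul q (D q)]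
  simp only [smul_vecMulVec, vecMulVec_smul]
  module

/-- Here `n = d + 1`, `e_k = Pi.single k.castSucc 1` for `k < n`, `e_n = Pi.single (Fin.last d) 1`
and `s̃ = Fin.snoc s (R + a)`. -/
theorem triple_product_formula_diagonal_general
    (d : ℕ)
    (J : Matrix (Fin (d+1)) (Fin (d+1)) ℝ)
    (hJdiag : ∀ μ ν, μ ≠ ν → J μ ν = 0)
    (m R a : ℝ) (hR : 0 < R)
    (s : Fin d → ℝ) (i j l : Fin d) :
    ((1/R^3) * killing
        (inertia J (wedge (Pi.single i.castSucc 1) (Pi.single j.castSucc 1)))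
        (wedge (Pi.single l.castSucc 1) (Pi.single (Fin.last d) 1))
      + m * edot
          ((-(1/R^2)) •
            (wedge (Pi.single i.castSucc 1) (Pi.single j.castSucc 1)).mulVec
              (Fin.snoc s (R + a)))
          (Pi.single l.castSucc 1 -
            (1/R) • (wedge (Pi.single l.castSucc 1) (Pi.single (Fin.last d) 1)).mulVec
              (Fin.snoc s (R + a)))
      = (m * a / R^3) * (s j * (if i = l then 1 else 0) - s i * (if j = l then 1 else 0)))
    ∧ (a = 0 →
      (1/R^3) * killing
        (inertia J (wedge (Pi.single i.castSucc 1) (Pi.single j.castSucc 1)))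
        (wedge (Pi.single l.castSucc 1) (Pi.single (Fin.last d) 1))
      + m * edot
          ((-(1/R^2)) •
            (wedge (Pi.single i.castSucc 1) (Pi.single j.castSucc 1)).mulVec
              (Fin.snoc s (R + a)))
          (Pi.single l.castSucc 1 -
            (1/R) • (wedge (Pi.single l.castSucc 1) (Pi.single (Fin.last d) 1)).mulVec
              (Fin.snoc s (R + a)))
      = 0) := by
  have hJ : J = diagonal J.diag := (IsDiag.diagonal_diag fun μ ν h => hJdiag μ ν h).symm
  have hgyro : killing (inertia J (wedge (Pi.single i.castSucc 1) (Pi.single j.castSucc 1)))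
      (wedge (Pi.single l.castSucc 1) (Pi.single (Fin.last d) 1)) = 0 := by
    rw [hJ, inertia_diagonal_wedge_single, killing_smul_left, killing_wedge_wedge]
    simp [Fin.castSucc_ne_last]
  have hΩ : wedge (Pi.single i.castSucc 1) (Pi.single j.castSucc 1) *ᵥ Fin.snoc s (R + a) =
      s j • Pi.single i.castSucc 1 - s i • Pi.single j.castSucc 1 := by
    rw [wedge_single_mulVec, Fin.snoc_castSucc, Fin.snoc_castSucc]
  have hvel : Pi.single l.castSucc 1 - (1/R) •
        (wedge (Pi.single l.castSucc 1) (Pi.single (Fin.last d) 1) *ᵥ Fin.snoc s (R + a)) =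
      (-(a/R)) • Pi.single l.castSucc 1 + (s l / R) • Pi.single (Fin.last d) 1 := by
    rw [wedge_single_mulVec, Fin.snoc_last, Fin.snoc_castSucc]
    match_scalars
    · field_simp
      ring
    · field_simp
  have hkin : ((-(1/R^2)) • (s j • Pi.single i.castSucc 1 - s i • Pi.single j.castSucc 1)) ⬝ᵥ
        ((-(a/R)) • Pi.single l.castSucc 1 + (s l / R) • Pi.single (Fin.last d) 1) =
      a / R^3 * (s j * (if i = l then 1 else 0) - s i * (if j = l then 1 else 0)) := by
    simp only [dotProduct_add, dotProduct_smul, smul_dotProduct, sub_dotProduct,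
      single_one_dotProduct, Pi.single_apply, Fin.castSucc_inj, Fin.castSucc_ne_last,
      smul_eq_mul, if_false]
    field_simp
    ring
  rw [hgyro, edot_eq_dotProduct, hΩ, hvel, hkin]
  exact ⟨by ring, fun ha => by rw [ha]; ring⟩

/-- triple-product formula for the rubber-rolling body with diagonal
mass tensor.  Ambient dimension `n = d + 1 ≥ 3`; `e_i = Pi.single i.castSucc 1`
for `i ≤ n − 1`, `e_n = Pi.single (Fin.last d) 1`, `s̃ = Fin.snoc s (R + a)`.
In particular, if `a = 0` the left-hand side vanishes identically. -/
theorem triple_product_formula_diagonal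
    (d : ℕ) (hd : 2 ≤ d)
    (J : Matrix (Fin (d+1)) (Fin (d+1)) ℝ) (hJsym : J.IsSymm) (hJpos : J.PosDef)
    (hJdiag : ∀ μ ν, μ ≠ ν → J μ ν = 0)
    (m R a : ℝ) (hm : 0 < m) (hR : 0 < R)
    (s : Fin d → ℝ) (i j l : Fin d) :
    ((1/R^3) * killing
        (inertia J (wedge (Pi.single i.castSucc 1) (Pi.single j.castSucc 1)))
        (wedge (Pi.single l.castSucc 1) (Pi.single (Fin.last d) 1))
      + m * edot
          ((-(1/R^2)) •
            (wedge (Pi.single i.castSucc 1) (Pi.single j.castSucc 1)).mulVec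
              (Fin.snoc s (R + a)))
          (Pi.single l.castSucc 1 -
            (1/R) • (wedge (Pi.single l.castSucc 1) (Pi.single (Fin.last d) 1)).mulVec
              (Fin.snoc s (R + a)))
      = (m * a / R^3) * (s j * (if i = l then 1 else 0) - s i * (if j = l then 1 else 0)))
    ∧ (a = 0 →
      (1/R^3) * killing
        (inertia J (wedge (Pi.single i.castSucc 1) (Pi.single j.castSucc 1)))
        (wedge (Pi.single l.castSucc 1) (Pi.single (Fin.last d) 1))
      + m * edot
          ((-(1/R^2)) •
            (wedge (Pi.single i.castSucc 1) (Pi.single j.castSucc 1)).mulVec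
              (Fin.snoc s (R + a)))
          (Pi.single l.castSucc 1 -
            (1/R) • (wedge (Pi.single l.castSucc 1) (Pi.single (Fin.last d) 1)).mulVec
              (Fin.snoc s (R + a)))
      = 0) :=
  triple_product_formula_diagonal_general d J hJdiag m R a hR s i j l
end
end
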